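/- Let V be an FI-module and a ∈ ℤ_{≥0}. If H_a(V) = 0, then H_a(SV) = 0. In particular, if V is F-acyclic (H_a(V)=0 for all a ≥ 1), then SV is F-acyclic. -/

import Mathlib

/-!
Background for: W.L. Gan, "A long exact sequence for homology of FI-modules".

`FICat` is the category of finite sets and injections; an FI-module over a
commutative ring `k` is a functor `FICat ⥤ ModuleCat k`.  `Sfun` is the shift
functor, `iota` the canonical map `V ⟶ SV`, `Dfun` the derivative (cokernel of
`iota`), `Kfun` its kernel, `Ffunctor` the functor `V ↦ V/JV`, and `HF a` the
FI-homology functor, i.e. the `a`-th left derived functor of `Ffunctor`.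
-/

open CategoryTheory CategoryTheory.Limits

/-- The category `FI` of finite sets and injective maps. -/
structure FICat : Type 1 where
  carrier : Type
  [fintype : Fintype carrier]

attribute [instance] FICat.fintype

instance : Category.{0} FICat where
  Hom X Y := {f : X.carrier → Y.carrier // Function.Injective f}
  id X := ⟨id, fun _ _ h => h⟩
  comp f g := ⟨g.1 ∘ f.1, g.2.comp f.2⟩

/-- The category of FI-modules over `k`. -/
abbrev FIMod (k : Type) [CommRing k] := FICat ⥤ ModuleCat.{0} k

variable (k : Type) [CommRing k]

/-- The finite set `{1, …, n}` as an object of `FI`. -/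
def FIfin (n : ℕ) : FICat := ⟨Fin n⟩

/-- The self-embedding `X ↦ X ⊔ {⋆}` of `FI`. -/
def sigmaF : FICat ⥤ FICat where
  obj X := ⟨X.carrier ⊕ PUnit⟩
  map f := ⟨Sum.map f.1 id, f.2.sumMap Function.injective_id⟩
  map_id X := by apply Subtype.ext; funext x; cases x <;> rfl
  map_comp f g := by apply Subtype.ext; funext x; cases x <;> rfl

/-- The shift functor `S` on FI-modules: `(SV)_X = V_{X ⊔ {⋆}}`. -/
def Sfun : FIMod k ⥤ FIMod k := (Functor.whiskeringLeft _ _ _).obj (sigmaF)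

instance : (Sfun k).Additive where
  map_add := by intros; apply NatTrans.ext; funext X; rfl

/-- The inclusion `X ↪ X ⊔ {⋆}` in `FI`. -/
def inclStar (X : FICat) : X ⟶ (sigmaF).obj X := ⟨Sum.inl, Sum.inl_injective⟩

/-- The natural map `ι : V ⟶ SV`. -/
def iota (V : FIMod k) : V ⟶ (Sfun k).obj V where
  app X := V.map (inclStar X)
  naturality X Y f := by
    dsimp [Sfun]
    rw [← V.map_comp, ← V.map_comp]
    congr 1

lemma iota_natural {V W : FIMod k} (η : V ⟶ W) :
    iota k V ≫ (Sfun k).map η = η ≫ iota k W := by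
  apply NatTrans.ext; funext X
  exact (η.naturality (inclStar X))

/-- The derivative functor `D`, with `DV = coker(ι : V → SV)`. -/
noncomputable def Dfun : FIMod k ⥤ FIMod k where
  obj V := cokernel (iota k V)
  map {V W} η := cokernel.map _ _ η ((Sfun k).map η) (iota_natural k η)
  map_id V := by apply coequalizer.hom_ext; simp
  map_comp f g := by apply coequalizer.hom_ext; simp

/-- The kernel functor `K`, with `KV = ker(ι : V → SV)`. -/
noncomputable def Kfun : FIMod k ⥤ FIMod k where
  obj V := kernel (iota k V)
  map {V W} η := kernel.map _ _ η ((Sfun k).map η) (iota_natural k η)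
  map_id V := by apply equalizer.hom_ext; simp
  map_comp f g := by apply equalizer.hom_ext; simp

noncomputable instance : (Dfun k).Additive where
  map_add := by intros; apply coequalizer.hom_ext; simp [Dfun]; erw [Preadditive.comp_add]; simp

/-- `(JV)_X`: the submodule of `V_X` spanned by the images of `f_* : V_Y → V_X`
over all injections `f : Y → X` with `|Y| < |X|` (i.e., non-surjective `f`). -/
def Jsub (V : FIMod k) (X : FICat) : Submodule k (V.obj X) :=
  ⨆ (p : Σ Y : FICat, Y ⟶ X) (_ : ¬ Function.Surjective p.2.1),
    LinearMap.range (V.map p.2).hom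

lemma Jsub_comap {V : FIMod k} {X Y : FICat} (f : X ⟶ Y) :
    Jsub k V X ≤ (Jsub k V Y).comap (V.map f).hom := by
  apply iSup_le
  rintro ⟨Z, g⟩
  apply iSup_le
  intro hg
  rintro _ ⟨w, rfl⟩
  have h1 : (V.map f).hom ((V.map g).hom w) = (V.map (g ≫ f)).hom w := by
    rw [V.map_comp]; rfl
  have h2 : ¬ Function.Surjective (g ≫ f).1 := by
    intro hs
    apply hg
    intro x
    obtain ⟨z, hz⟩ := hs (f.1 x)
    exact ⟨z, f.2 hz⟩
  refine Submodule.mem_comap.2 ?_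
  rw [h1]
  exact Submodule.mem_iSup_of_mem ⟨Z, g ≫ f⟩ (Submodule.mem_iSup_of_mem h2 ⟨w, rfl⟩)

/-- The right exact functor `F : V ↦ V/JV` on FI-modules. -/
noncomputable def Ffunctor : FIMod k ⥤ FIMod k where
  obj V :=
  { obj := fun X => ModuleCat.of k (V.obj X ⧸ Jsub k V X)
    map := fun {X Y} f => ModuleCat.ofHom (Submodule.mapQ _ _ (V.map f).hom (Jsub_comap k f))
    map_id := fun X => by
      apply ModuleCat.hom_ext
      apply Submodule.linearMap_qext
      ext x
      simp [V.map_id]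
    map_comp := fun {X Y Z} f g => by
      apply ModuleCat.hom_ext
      apply Submodule.linearMap_qext
      ext x
      simp [V.map_comp] }
  map {V W} η :=
  { app := fun X => ModuleCat.ofHom (Submodule.mapQ _ _ (η.app X).hom
      (by
        apply iSup_le
        rintro ⟨Z, g⟩
        apply iSup_le
        intro hg
        rintro _ ⟨w, rfl⟩
        have h1 : (η.app X).hom ((V.map g).hom w) = (W.map g).hom ((η.app Z).hom w) :=
          congrArg (fun φ => φ.hom w) (η.naturality g)
        refine Submodule.mem_comap.2 ?_
        rw [h1]
        exact Submodule.mem_iSup_of_mem ⟨Z, g⟩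
          (Submodule.mem_iSup_of_mem hg ⟨_, rfl⟩)))
    naturality := fun {X Y} f => by
      apply ModuleCat.hom_ext
      apply Submodule.linearMap_qext
      ext x
      have h1 : (η.app Y).hom ((V.map f).hom x) = (W.map f).hom ((η.app X).hom x) :=
        congrArg (fun φ => φ.hom x) (η.naturality f)
      exact congrArg (Submodule.Quotient.mk) h1 }
  map_id V := by
    apply NatTrans.ext; funext X
    apply ModuleCat.hom_ext
    apply Submodule.linearMap_qext
    ext x
    rfl
  map_comp f g := by
    apply NatTrans.ext; funext X
    apply ModuleCat.hom_ext
    apply Submodule.linearMap_qext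
    ext x
    rfl

noncomputable instance : (Ffunctor k).Additive where
  map_add := by
    intros
    apply NatTrans.ext; funext X
    apply ModuleCat.hom_ext
    apply Submodule.linearMap_qext
    ext x
    rfl

section Homology

variable [EnoughProjectives (FIMod k)]

/-- The FI-homology functor `H_a`: the `a`-th left derived functor of `F`. -/
noncomputable def HF (a : ℕ) : FIMod k ⥤ FIMod k := (Ffunctor k).leftDerived a

/-- `H_a(V)_n`, the value of the FI-homology `H_a(V)` at `{1,…,n}`. -/
noncomputable def Hmod (a : ℕ) (V : FIMod k) (n : ℕ) : ModuleCat k :=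
  ((HF k a).obj V).obj (FIfin n)

/-- `hd_a(V) ≤ m` (with `m : ℤ`, so that `m = -1` means `H_a(V)` vanishes
in all degrees): the `a`-th homological degree is at most `m`. -/
def hdLE (a : ℕ) (V : FIMod k) (m : ℤ) : Prop :=
  ∀ n : ℕ, m < (n : ℤ) → Subsingleton (Hmod k a V n)

/-- `reg(V) ≤ c`: the Castelnuovo–Mumford regularity of `V` is at most `c`,
i.e. `hd_a(V) ≤ c + a` for all `a ≥ 1`. -/
def regLE (V : FIMod k) (c : ℤ) : Prop :=
  ∀ a : ℕ, 1 ≤ a → hdLE k a V (c + a)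

/-- An FI-module is zero iff it vanishes on every finite set. -/
def IsZeroMod (V : FIMod k) : Prop := ∀ X : FICat, Subsingleton (V.obj X)

/-- `V` is `F`-acyclic: `H_a(V) = 0` for all `a ≥ 1`. -/
def FAcyclic (V : FIMod k) : Prop :=
  ∀ a : ℕ, 1 ≤ a → IsZeroMod k ((HF k a).obj V)

/-- `V` is generated in degree `≤ kk` and related in degree `≤ d`: there is a
short exact sequence `0 → W → P → V → 0` with `P` projective generated in
degree `≤ kk` and `W` generated in degree `≤ d`. -/
def GenRel (V : FIMod k) (kk d : ℤ) : Prop :=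
  ∃ (W P : FIMod k) (f : W ⟶ P) (g : P ⟶ V) (w : f ≫ g = 0),
    Mono f ∧ Epi g ∧ (ShortComplex.mk f g w).Exact ∧
      Projective P ∧ hdLE k 0 P kk ∧ hdLE k 0 W d

end Homology

/-- `td(V) ≤ c`: any torsion element of `V_n` (killed by every injection
`[n] → [n+1]`) with `(n : ℤ) > c` is zero. -/
def tdLE (V : FIMod k) (c : ℤ) : Prop :=
  ∀ n : ℕ, c < (n : ℤ) → ∀ v : V.obj (FIfin n),
    (∀ f : FIfin n ⟶ FIfin (n + 1), V.map f v = 0) → v = 0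

/-- The `i`-th iterated shift `S^i V`. -/
noncomputable def Siter (i : ℕ) (V : FIMod k) : FIMod k := ((Sfun k).obj)^[i] V

/-! ### Auxiliary development -/

namespace FIShiftAux

open CategoryTheory CategoryTheory.Limits

variable {k : Type} [CommRing k]

lemma FIhom_ext {X Y : FICat} {f g : X ⟶ Y} (h : ∀ x, f.1 x = g.1 x) : f = g :=
  Subtype.ext (funext h)

lemma comp_val {X Y Z : FICat} (f : X ⟶ Y) (g : Y ⟶ Z) (x : X.carrier) :
    (f ≫ g).1 x = g.1 (f.1 x) := rfl

lemma sigmaF_map_inl {X Y : FICat} (f : X ⟶ Y) (x : X.carrier) :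
    (sigmaF.map f).1 (Sum.inl x) = Sum.inl (f.1 x) := rfl

lemma sigmaF_map_inr {X Y : FICat} (f : X ⟶ Y) (u : PUnit) :
    (sigmaF.map f).1 (Sum.inr u) = Sum.inr u := rfl

/-- Extract the left component of an element of `A ⊕ PUnit` that is not the point. -/
def extract {A : Type} : (s : A ⊕ PUnit) → s ≠ Sum.inr PUnit.unit → A
  | Sum.inl a, _ => a
  | Sum.inr u, h => absurd (by cases u; rfl) h

lemma inl_extract {A : Type} (s : A ⊕ PUnit) (h : s ≠ Sum.inr PUnit.unit) :
    Sum.inl (extract s h) = s := by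
  cases s with
  | inl a => rfl
  | inr u => exact absurd (by cases u; rfl) h

lemma extract_map {A B : Type} (f : A → B) (s : A ⊕ PUnit)
    (h : s ≠ Sum.inr PUnit.unit) (h' : Sum.map f id s ≠ Sum.inr PUnit.unit) :
    extract (Sum.map f id s) h' = f (extract s h) := by
  cases s with
  | inl a => rfl
  | inr u => exact absurd (by cases u; rfl) h

section Jbasics

lemma range_le_Jsub (V : FIMod k) {Y X : FICat} (f : Y ⟶ X)
    (hf : ¬ Function.Surjective f.1) : LinearMap.range (V.map f).hom ≤ Jsub k V X :=
  le_iSup_of_le ⟨Y, f⟩ (le_iSup_of_le hf le_rfl)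

lemma Jsub_map_le {V W : FIMod k} (η : V ⟶ W) (X : FICat) :
    Submodule.map (η.app X).hom (Jsub k V X) ≤ Jsub k W X := by
  rw [Submodule.map_le_iff_le_comap]
  apply iSup_le; rintro ⟨Z, g⟩; apply iSup_le; intro hg
  rintro _ ⟨w, rfl⟩
  have h1 : (η.app X) ((V.map g) w) = (W.map g) ((η.app Z) w) :=
    ConcreteCategory.congr_hom (η.naturality g) w
  refine Submodule.mem_comap.2 ?_
  rw [h1]
  exact range_le_Jsub W g hg ⟨_, rfl⟩

lemma inclStar_not_surjective (X : FICat) : ¬ Function.Surjective (inclStar X).1 := by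
  intro h
  obtain ⟨x, hx⟩ := h (Sum.inr PUnit.unit)
  exact Sum.inl_ne_inr hx

lemma sigmaF_map_not_surjective {Y X : FICat} (f : Y ⟶ X)
    (hf : ¬ Function.Surjective f.1) : ¬ Function.Surjective (sigmaF.map f).1 := by
  intro h
  apply hf
  intro x
  obtain ⟨y, hy⟩ := h (Sum.inl x)
  cases y with
  | inl y =>
    refine ⟨y, ?_⟩
    rw [sigmaF_map_inl] at hy
    exact Sum.inl_injective hy
  | inr y => rw [sigmaF_map_inr] at hy; exact absurd hy (by simp)

end Jbasics

section Gadgets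

variable {Y X X' : FICat}

/-- `u : Y ⟶ X ⊔ {⋆}` misses the point. -/
def MissesStar (u : Y ⟶ sigmaF.obj X) : Prop := ∀ y, u.1 y ≠ Sum.inr PUnit.unit

lemma missesStar_comp_iff (u : Y ⟶ sigmaF.obj X) (f : X ⟶ X') :
    MissesStar (u ≫ sigmaF.map f) ↔ MissesStar u := by
  unfold MissesStar
  refine forall_congr' fun y => ?_
  rw [comp_val]
  cases hy : u.1 y with
  | inl a => exact ⟨fun _ => Sum.inl_ne_inr, fun _ => Sum.inl_ne_inr⟩
  | inr b => cases b; exact ⟨fun h => absurd rfl h, fun h => absurd rfl h⟩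

lemma extract_inj {A : Type} {s t : A ⊕ PUnit} {hs : s ≠ Sum.inr PUnit.unit}
    {ht : t ≠ Sum.inr PUnit.unit} (h : extract s hs = extract t ht) : s = t := by
  rw [← inl_extract s hs, ← inl_extract t ht, h]

/-- Retraction of a star-missing map through `inclStar`. -/
noncomputable def retr (u : Y ⟶ sigmaF.obj X) (h : MissesStar u) : Y ⟶ X :=
  ⟨fun y => extract (u.1 y) (h y), fun _ _ hab => u.2 (extract_inj hab)⟩

lemma retr_comp (u : Y ⟶ sigmaF.obj X) (h : MissesStar u) :
    retr u h ≫ inclStar X = u :=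
  FIhom_ext fun y => inl_extract (u.1 y) (h y)

lemma retr_natural (u : Y ⟶ sigmaF.obj X) (f : X ⟶ X') (h : MissesStar u)
    (h' : MissesStar (u ≫ sigmaF.map f)) :
    retr (u ≫ sigmaF.map f) h' = retr u h ≫ f := by
  apply FIhom_ext; intro y
  rw [comp_val]
  exact extract_map f.1 (u.1 y) (h y) (h' y)

/-- The unique point hitting `⋆`. -/
noncomputable def starPt (u : Y ⟶ sigmaF.obj X) (h : ¬ MissesStar u) : Y.carrier :=
  (not_forall.1 h).choose

lemma starPt_spec (u : Y ⟶ sigmaF.obj X) (h : ¬ MissesStar u) :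
    u.1 (starPt u h) = Sum.inr PUnit.unit :=
  not_not.1 (not_forall.1 h).choose_spec

lemma starPt_unique (u : Y ⟶ sigmaF.obj X) (h : ¬ MissesStar u) {y : Y.carrier}
    (hy : u.1 y = Sum.inr PUnit.unit) : y = starPt u h :=
  u.2 (hy.trans (starPt_spec u h).symm)

lemma starPt_comp (u : Y ⟶ sigmaF.obj X) (f : X ⟶ X') (h : ¬ MissesStar u)
    (h' : ¬ MissesStar (u ≫ sigmaF.map f)) :
    starPt (u ≫ sigmaF.map f) h' = starPt u h := by
  apply starPt_unique
  have := starPt_spec (u ≫ sigmaF.map f) h'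
  rw [comp_val] at this
  cases hy : u.1 (starPt (u ≫ sigmaF.map f) h') with
  | inl a => rw [hy] at this; exact absurd this (by simp [sigmaF_map_inl])
  | inr b => cases b; rfl

/-- The finite set `Y ∖ {y0}`. -/
noncomputable def minusObj (Y : FICat) (y0 : Y.carrier) : FICat :=
  letI : DecidableEq Y.carrier := Classical.decEq _
  ⟨{y : Y.carrier // y ≠ y0}⟩

/-- For `u : Y ⟶ X ⊔ {⋆}` with `u y0 = ⋆`, the induced map `Y ∖ {y0} ⟶ X`. -/
noncomputable def coHom (u : Y ⟶ sigmaF.obj X) (y0 : Y.carrier)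
    (h0 : u.1 y0 = Sum.inr PUnit.unit) : minusObj Y y0 ⟶ X :=
  ⟨fun w => extract (u.1 w.1) (fun hw => w.2 (u.2 (hw.trans h0.symm))),
    fun _ _ hab => Subtype.ext (u.2 (extract_inj hab))⟩

lemma coHom_natural (u : Y ⟶ sigmaF.obj X) (f : X ⟶ X') (y0 : Y.carrier)
    (h0 : u.1 y0 = Sum.inr PUnit.unit)
    (h0' : (u ≫ sigmaF.map f).1 y0 = Sum.inr PUnit.unit) :
    coHom (u ≫ sigmaF.map f) y0 h0' = coHom u y0 h0 ≫ f := by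
  apply FIhom_ext; rintro ⟨w, hw⟩
  exact extract_map f.1 (u.1 w) _ _

/-- The map `Y ⟶ (Y ∖ {y0}) ⊔ {⋆}` sending `y0` to `⋆`. -/
noncomputable def h0Hom (Y : FICat) (y0 : Y.carrier) : Y ⟶ sigmaF.obj (minusObj Y y0) :=
  letI : DecidableEq Y.carrier := Classical.decEq _
  ⟨fun y => if h : y = y0 then Sum.inr PUnit.unit else Sum.inl ⟨y, h⟩, by
    intro a b hab
    dsimp only at hab
    by_cases ha : a = y0 <;> by_cases hb : b = y0
    · rw [ha, hb]
    · erw [dif_pos ha, dif_neg hb] at hab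
      exact absurd hab (by simp)
    · erw [dif_neg ha, dif_pos hb] at hab
      exact absurd hab (by simp)
    · erw [dif_neg ha, dif_neg hb] at hab
      exact congrArg Subtype.val (Sum.inl_injective hab)⟩

lemma h0Hom_apply_self (Y : FICat) (y0 : Y.carrier) :
    (h0Hom Y y0).1 y0 = Sum.inr PUnit.unit := by
  simp [h0Hom]; rfl

lemma h0Hom_apply_ne (Y : FICat) (y0 : Y.carrier) {y : Y.carrier} (h : y ≠ y0) :
    (h0Hom Y y0).1 y = Sum.inl ⟨y, h⟩ := by
  simp [h0Hom, h]; rfl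

lemma h0Hom_comp (u : Y ⟶ sigmaF.obj X) (y0 : Y.carrier)
    (h0 : u.1 y0 = Sum.inr PUnit.unit) :
    h0Hom Y y0 ≫ sigmaF.map (coHom u y0 h0) = u := by
  apply FIhom_ext; intro y
  rw [comp_val]
  by_cases hy : y = y0
  · subst hy
    rw [h0Hom_apply_self, sigmaF_map_inr]
    exact h0.symm
  · rw [h0Hom_apply_ne Y y0 hy]
    exact inl_extract _ _

/-- The coordinate-wise version: if `s ≠ inl x` then `s` lifts to `(A∖{x}) ⊕ ⋆`. -/
def toMinus {A : Type} (x : A) : (s : A ⊕ PUnit) → s ≠ Sum.inl x → ({z : A // z ≠ x} ⊕ PUnit)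
  | Sum.inl a, h => Sum.inl ⟨a, fun ha => h (by rw [ha])⟩
  | Sum.inr _, _ => Sum.inr PUnit.unit

lemma map_val_toMinus {A : Type} (x : A) (s : A ⊕ PUnit) (h : s ≠ Sum.inl x) :
    Sum.map Subtype.val id (toMinus x s h) = s := by
  cases s with
  | inl a => rfl
  | inr u => cases u; rfl

lemma toMinus_inj {A : Type} (x : A) (s t : A ⊕ PUnit) (hs : s ≠ Sum.inl x)
    (ht : t ≠ Sum.inl x) (h : toMinus x s hs = toMinus x t ht) : s = t := by
  cases s with
  | inl a =>
    cases t with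
    | inl b => simp only [toMinus, Sum.inl.injEq, Subtype.mk.injEq] at h; rw [h]
    | inr v => exact absurd h (by simp [toMinus])
  | inr u =>
    cases t with
    | inl b => exact absurd h (by simp [toMinus])
    | inr v => cases u; cases v; rfl

/-- The inclusion `X ∖ {x} ⟶ X`. -/
noncomputable def valHom (X : FICat) (x : X.carrier) : minusObj X x ⟶ X :=
  ⟨Subtype.val, Subtype.val_injective⟩

lemma valHom_not_surjective (X : FICat) (x : X.carrier) :
    ¬ Function.Surjective (valHom X x).1 := by
  intro h
  obtain ⟨w, hw⟩ := h x
  exact w.2 hw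

/-- For `u : Y ⟶ X ⊔ ⋆` missing `inl x`, the factorization through `(X∖{x}) ⊔ ⋆`. -/
noncomputable def intoMinus (u : Y ⟶ sigmaF.obj X) (x : X.carrier)
    (hx : ∀ y, u.1 y ≠ Sum.inl x) : Y ⟶ sigmaF.obj (minusObj X x) :=
  ⟨fun y => toMinus x (u.1 y) (hx y), by
    intro a b hab
    exact u.2 (toMinus_inj x _ _ _ _ hab)⟩

lemma intoMinus_comp (u : Y ⟶ sigmaF.obj X) (x : X.carrier)
    (hx : ∀ y, u.1 y ≠ Sum.inl x) :
    intoMinus u x hx ≫ sigmaF.map (valHom X x) = u := by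
  apply FIhom_ext; intro y
  rw [comp_val]
  exact map_val_toMinus x (u.1 y) (hx y)

end Gadgets

end FIShiftAux

namespace FIShiftAux

open CategoryTheory CategoryTheory.Limits

variable {k : Type} [CommRing k]

section KeyDecomposition

/-- Key decomposition: `J(V)_{X ⊔ ⋆} = im(ι) + J(SV)_X`. -/
lemma Jsub_sigma_obj (V : FIMod k) (X : FICat) :
    Jsub k V (sigmaF.obj X) =
      LinearMap.range (V.map (inclStar X)).hom ⊔ Jsub k ((Sfun k).obj V) X := by
  apply le_antisymm
  · apply iSup_le; rintro ⟨Z, g⟩; apply iSup_le; intro hg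
    by_cases hz : MissesStar g
    · -- `g` misses the star: it factors through `inclStar`
      refine le_sup_of_le_left ?_
      rintro _ ⟨v, rfl⟩
      refine ⟨V.map (retr g hz) v, ?_⟩
      have hcv : V.map (retr g hz) ≫ V.map (inclStar X) = V.map g := by
        rw [← V.map_comp, retr_comp]
      exact ConcreteCategory.congr_hom hcv v
    · -- `g` hits the star at `z0`
      set z0 := starPt g hz with hz0
      have hspec := starPt_spec g hz
      have hfns : ¬ Function.Surjective (coHom g z0 hspec).1 := by
        intro hs
        apply hg
        intro s
        cases s with
        | inr u => cases u; exact ⟨z0, hspec⟩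
        | inl x =>
          obtain ⟨w, hw⟩ := hs x
          refine ⟨w.1, ?_⟩
          have : Sum.inl ((coHom g z0 hspec).1 w) = g.1 w.1 := inl_extract _ _
          rw [← this, hw]
      refine le_sup_of_le_right ?_
      have hcomp : h0Hom Z z0 ≫ sigmaF.map (coHom g z0 hspec) = g := h0Hom_comp g z0 hspec
      have hle : LinearMap.range (V.map g).hom ≤
          LinearMap.range (V.map (sigmaF.map (coHom g z0 hspec))).hom := by
        rintro _ ⟨v, rfl⟩
        refine ⟨V.map (h0Hom Z z0) v, ?_⟩
        have hcv : V.map (h0Hom Z z0) ≫ V.map (sigmaF.map (coHom g z0 hspec)) = V.map g := by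
          rw [← V.map_comp, hcomp]
        exact ConcreteCategory.congr_hom hcv v
      exact hle.trans (range_le_Jsub ((Sfun k).obj V) (coHom g z0 hspec) hfns)
  · apply sup_le
    · exact range_le_Jsub V (inclStar X) (inclStar_not_surjective X)
    · apply iSup_le; rintro ⟨Z, g⟩; apply iSup_le; intro hg
      exact range_le_Jsub V (sigmaF.map g) (sigmaF_map_not_surjective g hg)

lemma Jsub_shift_le (V : FIMod k) (X : FICat) :
    Jsub k ((Sfun k).obj V) X ≤ Jsub k V (sigmaF.obj X) := by
  rw [Jsub_sigma_obj]; exact le_sup_right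

end KeyDecomposition

section AlphaBeta

variable (k)

/-- The natural transformation `F(V) ⟶ F(SV)` induced by `ι`. -/
noncomputable def alphaNT : Ffunctor k ⟶ Sfun k ⋙ Ffunctor k where
  app V := (Ffunctor k).map (iota k V)
  naturality {V W} η := by
    dsimp only [Functor.comp_map]
    rw [← Functor.map_comp, ← Functor.map_comp, iota_natural]

/-- The natural transformation `F(SV) ⟶ S(F(V))` (quotient by a bigger submodule). -/
noncomputable def betaApp (V : FIMod k) :
    (Sfun k ⋙ Ffunctor k).obj V ⟶ (Ffunctor k ⋙ Sfun k).obj V where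
  app X := ModuleCat.ofHom (Submodule.mapQ (Jsub k ((Sfun k).obj V) X) (Jsub k V (sigmaF.obj X))
    LinearMap.id (fun _ hx => Jsub_shift_le V X hx))
  naturality {X Y} f := by
    apply ModuleCat.hom_ext
    apply Submodule.linearMap_qext
    rfl

noncomputable def betaNT : Sfun k ⋙ Ffunctor k ⟶ Ffunctor k ⋙ Sfun k where
  app := betaApp k
  naturality {V W} η := by
    apply NatTrans.ext; funext X
    apply ModuleCat.hom_ext
    apply Submodule.linearMap_qext
    rfl

lemma alpha_comp_beta (V : FIMod k) : (alphaNT k).app V ≫ (betaNT k).app V = 0 := by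
  apply NatTrans.ext; funext X
  apply ModuleCat.hom_ext
  apply Submodule.linearMap_qext
  apply LinearMap.ext; intro v
  show Submodule.Quotient.mk ((V.map (inclStar X)) v) = 0
  rw [Submodule.Quotient.mk_eq_zero]
  exact range_le_Jsub V (inclStar X) (inclStar_not_surjective X) ⟨v, rfl⟩

/-- The basic short complex `F V ⟶ F(SV) ⟶ S(F V)`. -/
noncomputable def scMod (V : FIMod k) : ShortComplex (FIMod k) :=
  ShortComplex.mk ((alphaNT k).app V) ((betaNT k).app V) (alpha_comp_beta k V)

end AlphaBeta

section ZeroLemmas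

lemma subsingleton_of_isZero {M : ModuleCat k} (h : IsZero M) : Subsingleton M := by
  constructor
  intro a b
  have h0 : (𝟙 M : M ⟶ M) = 0 := h.eq_of_src _ _
  have ha : a = (𝟙 M : M ⟶ M) a := rfl
  have hb : b = (𝟙 M : M ⟶ M) b := rfl
  rw [ha, hb, h0]
  exact (LinearMap.zero_apply a).trans (LinearMap.zero_apply b).symm

lemma isZero_of_isZeroMod {V : FIMod k} (h : IsZeroMod k V) : IsZero V :=
  Functor.isZero _ (fun X => @ModuleCat.isZero_of_subsingleton _ _ _ (h X))

lemma isZeroMod_of_isZero {V : FIMod k} (h : IsZero V) : IsZeroMod k V :=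
  fun X => subsingleton_of_isZero ((V.isZero_iff).1 h X)

end ZeroLemmas

section Exactness

/-- Exactness in the functor category can be checked objectwise. -/
lemma exact_of_eval (S : ShortComplex (FIMod k))
    (h : ∀ X : FICat, (S.map ((evaluation FICat (ModuleCat k)).obj X)).Exact) :
    S.Exact := by
  rw [ShortComplex.exact_iff_isZero_homology]
  apply Functor.isZero
  intro X
  exact IsZero.of_iso ((ShortComplex.exact_iff_isZero_homology _).1 (h X))
    (S.mapHomologyIso ((evaluation FICat (ModuleCat k)).obj X)).symm

lemma shortExact_scMod {Q : FIMod k} (hmono : Mono ((alphaNT k).app Q)) :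
    (scMod k Q).ShortExact := by
  have hepi : Epi ((betaNT k).app Q) := by
    haveI : ∀ X : FICat, Epi (((betaNT k).app Q).app X) := by
      intro X
      rw [ModuleCat.epi_iff_surjective]
      intro q
      obtain ⟨x, rfl⟩ := Submodule.Quotient.mk_surjective _ q
      exact ⟨Submodule.Quotient.mk x, rfl⟩
    exact NatTrans.epi_of_epi_app _
  refine ShortComplex.ShortExact.mk' ?_ hmono hepi
  apply exact_of_eval
  intro X
  rw [ShortComplex.moduleCat_exact_iff_ker_sub_range]
  intro q hq
  obtain ⟨x, rfl⟩ := Submodule.Quotient.mk_surjective _ q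
  have hx : x ∈ Jsub k Q (sigmaF.obj X) := by
    have hq' : Submodule.Quotient.mk (p := Jsub k Q (sigmaF.obj X)) x = 0 := hq
    exact (Submodule.Quotient.mk_eq_zero _).1 hq'
  rw [Jsub_sigma_obj] at hx
  obtain ⟨y, hy, z, hz, hyz⟩ := (Submodule.mem_sup (M := ↑(Q.obj (sigmaF.obj X)))).1 hx
  obtain ⟨v, rfl⟩ := hy
  refine ⟨Submodule.Quotient.mk v, ?_⟩
  show Submodule.Quotient.mk ((Q.map (inclStar X)) v) = Submodule.Quotient.mk x
  erw [Submodule.Quotient.eq]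
  rw [← hyz]
  convert neg_mem hz using 1
  simp
  exact Iff.rfl

end Exactness

end FIShiftAux

namespace FIShiftAux

open CategoryTheory CategoryTheory.Limits

variable {k : Type} [CommRing k]

section FreeModules

variable {I : Type} (Yf : I → FICat)

/-- The free FI-module on a family of objects `Yf`. -/
noncomputable def FreeMod (k : Type) [CommRing k] {I : Type} (Yf : I → FICat) : FIMod k where
  obj X := ModuleCat.of k ((Σ i, Yf i ⟶ X) →₀ k)
  map {X Y} f := ModuleCat.ofHom (Finsupp.lmapDomain k k (fun p => ⟨p.1, p.2 ≫ f⟩))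
  map_id X := by
    have h : (fun p : Σ i, Yf i ⟶ X => (⟨p.1, p.2 ≫ 𝟙 X⟩ : Σ i, Yf i ⟶ X)) = id := by
      funext p; cases p with | mk i f => simp
    apply ModuleCat.hom_ext
    show Finsupp.lmapDomain k k _ = _
    rw [h, Finsupp.lmapDomain_id]
    rfl
  map_comp {X Y Z} f g := by
    have h : (fun p : Σ i, Yf i ⟶ X => (⟨p.1, p.2 ≫ (f ≫ g)⟩ : Σ i, Yf i ⟶ Z)) =
        (fun p : Σ i, Yf i ⟶ Y => (⟨p.1, p.2 ≫ g⟩ : Σ i, Yf i ⟶ Z)) ∘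
          (fun p : Σ i, Yf i ⟶ X => (⟨p.1, p.2 ≫ f⟩ : Σ i, Yf i ⟶ Y)) := by
      funext p; cases p with | mk i u => simp
    apply ModuleCat.hom_ext
    show Finsupp.lmapDomain k k _ = _
    rw [h, Finsupp.lmapDomain_comp]
    rfl

lemma freeMod_map_single {X Y : FICat} (f : X ⟶ Y) (p : Σ i, Yf i ⟶ X) (a : k) :
    (FreeMod k Yf).map f (Finsupp.single p a) = Finsupp.single ⟨p.1, p.2 ≫ f⟩ a :=
  Finsupp.mapDomain_single

/-- A morphism out of a free module, determined by the images of the generators. -/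
noncomputable def freeHom (W : FIMod k) (c : ∀ i, W.obj (Yf i)) :
    FreeMod k Yf ⟶ W where
  app X := ModuleCat.ofHom (Finsupp.lift (W.obj X) k (Σ i, Yf i ⟶ X) (fun p => (W.map p.2) (c p.1)))
  naturality {X Y} f := by
    apply ModuleCat.hom_ext
    apply Finsupp.lhom_ext
    intro p a
    show Finsupp.lift (W.obj Y) k _ _ ((FreeMod k Yf).map f (Finsupp.single p a)) =
      (W.map f) (Finsupp.lift (W.obj X) k _ _ (Finsupp.single p a))
    rw [freeMod_map_single]
    simp only [Finsupp.lift_apply, Finsupp.sum_single_index, zero_smul, map_smul]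
    rw [W.map_comp]
    rfl

lemma freeHom_app_single (W : FIMod k) (c : ∀ i, W.obj (Yf i)) (X : FICat)
    (p : Σ i, Yf i ⟶ X) (a : k) :
    (freeHom Yf W c).app X (Finsupp.single p a) = a • (W.map p.2) (c p.1) := by
  show Finsupp.lift (W.obj X) k _ _ (Finsupp.single p a) = _
  simp [Finsupp.lift_apply, Finsupp.sum_single_index]

lemma freeMod_projective : Projective (FreeMod k Yf) where
  factors {E Z} u e he := by
    have hsurj : ∀ i, Function.Surjective (e.app (Yf i)) := by
      intro i
      rw [← ModuleCat.epi_iff_surjective]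
      infer_instance
    choose c hc using fun i =>
      hsurj i (u.app (Yf i) (Finsupp.single ⟨i, 𝟙 (Yf i)⟩ 1))
    refine ⟨freeHom Yf E c, ?_⟩
    apply NatTrans.ext; funext X
    apply ModuleCat.hom_ext
    apply Finsupp.lhom_ext
    intro p a
    cases p with | mk i g =>
    show e.app X ((freeHom Yf E c).app X (Finsupp.single ⟨i, g⟩ a)) =
      u.app X (Finsupp.single ⟨i, g⟩ a)
    rw [freeHom_app_single, map_smul]
    have h1 : e.app X ((E.map g) (c i)) = (Z.map g) (e.app (Yf i) (c i)) :=
      ConcreteCategory.congr_hom (e.naturality g) (c i)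
    rw [h1, hc i]
    have h2 : (Z.map g) (u.app (Yf i) (Finsupp.single ⟨i, 𝟙 (Yf i)⟩ 1)) =
        u.app X ((FreeMod k Yf).map g (Finsupp.single ⟨i, 𝟙 (Yf i)⟩ 1)) :=
      (ConcreteCategory.congr_hom (u.naturality g) _).symm
    rw [h2, freeMod_map_single]
    simp only [Category.id_comp]
    erw [← map_smul]
    congr 1
    erw [Finsupp.smul_single]
    simp
    rfl
end FreeModules

section Cover

/-- Index type for the canonical free cover of `V`. -/
def coverIdx (V : FIMod k) : Type := Σ n : ℕ, V.obj (FIfin n)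

/-- Family of objects for the canonical free cover. -/
def coverFam (V : FIMod k) : coverIdx V → FICat := fun p => FIfin p.1

/-- The canonical free cover `Fr(V) ⟶ V`. -/
noncomputable def coverHom (V : FIMod k) : FreeMod k (coverFam V) ⟶ V :=
  freeHom _ V (fun p => p.2)

lemma coverHom_surjective (V : FIMod k) (X : FICat) :
    Function.Surjective ((coverHom V).app X) := by
  intro x
  set n := Fintype.card X.carrier with hn
  set eqv := Fintype.equivFin X.carrier with heqv
  set φ : FIfin n ⟶ X := ⟨eqv.symm, eqv.symm.injective⟩ with hφ
  set ψ : X ⟶ FIfin n := ⟨eqv, eqv.injective⟩ with hψ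
  refine ⟨Finsupp.single ⟨⟨n, V.map ψ x⟩, φ⟩ 1, ?_⟩
  have h1 := freeHom_app_single (coverFam V) V (fun p => p.2) X ⟨⟨n, V.map ψ x⟩, φ⟩ 1
  rw [show coverHom V = freeHom _ V (fun p => p.2) from rfl, h1, one_smul]
  show (V.map φ) ((V.map ψ) x) = x
  have h2 : (V.map φ) ((V.map ψ) x) = V.map (ψ ≫ φ) x := by
    rw [V.map_comp]; rfl
  rw [h2]
  have h3 : ψ ≫ φ = 𝟙 X := FIhom_ext fun y => eqv.symm_apply_apply y
  rw [h3, V.map_id]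
  rfl

instance coverHom_epi (V : FIMod k) : Epi (coverHom V) := by
  haveI : ∀ X : FICat, Epi ((coverHom V).app X) := by
    intro X
    rw [ModuleCat.epi_iff_surjective]
    exact coverHom_surjective V X
  exact NatTrans.epi_of_epi_app _

end Cover

end FIShiftAux

namespace FIShiftAux

open CategoryTheory CategoryTheory.Limits

variable {k : Type} [CommRing k]

section JFree

variable {I : Type} (Yf : I → FICat)

/-- Basis elements of the free module generating `J`. -/
def badSet (X : FICat) : Set (Σ i, Yf i ⟶ X) := {p | ¬ Function.Surjective p.2.1}

/-- Basis elements of the shifted free module generating `J(S Fr)`. -/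
def sBad (X : FICat) : Set (Σ i, Yf i ⟶ sigmaF.obj X) :=
  {p | ∃ x : X.carrier, ∀ y, p.2.1 y ≠ Sum.inl x}

lemma jsub_freeMod (X : FICat) :
    Jsub k (FreeMod k Yf) X = Finsupp.supported k k (badSet Yf X) := by
  classical
  apply le_antisymm
  · apply iSup_le; rintro ⟨Z, g⟩; apply iSup_le; intro hg
    rintro _ ⟨m, rfl⟩
    rw [show ((FreeMod k Yf).map g) m = Finsupp.mapDomain
      (fun p : Σ i, Yf i ⟶ Z => (⟨p.1, p.2 ≫ g⟩ : Σ i, Yf i ⟶ X)) m from rfl]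
    erw [Finsupp.mem_supported]
    intro p hp
    obtain ⟨q, hq, rfl⟩ := Finset.mem_image.1 (Finsupp.mapDomain_support (Finset.mem_coe.1 hp))
    intro hsurj
    have hcs : Function.Surjective (g.1 ∘ q.2.1) := hsurj
    exact hg hcs.of_comp
  · erw [Finsupp.supported_eq_span_single, Submodule.span_le]
    rintro _ ⟨p, hp, rfl⟩
    show Finsupp.single p (1:k) ∈ Jsub k (FreeMod k Yf) X
    have heq : (Finsupp.single p (1:k) : (Σ i, Yf i ⟶ X) →₀ k) =
        (FreeMod k Yf).map p.2 (Finsupp.single ⟨p.1, 𝟙 (Yf p.1)⟩ 1) := by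
      rw [freeMod_map_single, Category.id_comp, Sigma.eta]
    rw [heq]
    exact range_le_Jsub _ p.2 hp ⟨_, rfl⟩

lemma jsub_sFreeMod (X : FICat) :
    Jsub k ((Sfun k).obj (FreeMod k Yf)) X = Finsupp.supported k k (sBad Yf X) := by
  classical
  apply le_antisymm
  · apply iSup_le; rintro ⟨Z, g⟩; apply iSup_le; intro hg
    rintro _ ⟨m, rfl⟩
    rw [show (((Sfun k).obj (FreeMod k Yf)).map g) m = Finsupp.mapDomain
      (fun p : Σ i, Yf i ⟶ sigmaF.obj Z =>
        (⟨p.1, p.2 ≫ sigmaF.map g⟩ : Σ i, Yf i ⟶ sigmaF.obj X)) m from rfl]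
    erw [Finsupp.mem_supported]
    obtain ⟨x, hx⟩ : ∃ x : X.carrier, ∀ z, g.1 z ≠ x := by
      by_contra hc
      push_neg at hc
      exact hg fun x => hc x
    intro p hp
    obtain ⟨q, hq, rfl⟩ := Finset.mem_image.1 (Finsupp.mapDomain_support (Finset.mem_coe.1 hp))
    refine ⟨x, fun y hy => ?_⟩
    rw [comp_val] at hy
    cases hq2 : q.2.1 y with
    | inl z =>
      rw [hq2, sigmaF_map_inl] at hy
      exact hx z (Sum.inl_injective hy)
    | inr w =>
      rw [hq2, sigmaF_map_inr] at hy
      exact absurd hy (by simp)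
  · erw [Finsupp.supported_eq_span_single, Submodule.span_le]
    rintro _ ⟨p, hp, rfl⟩
    show Finsupp.single p (1:k) ∈ Jsub k ((Sfun k).obj (FreeMod k Yf)) X
    obtain ⟨i, u⟩ := p
    obtain ⟨x, hx⟩ := hp
    have heq : (Finsupp.single (⟨i, u⟩ : Σ i, Yf i ⟶ sigmaF.obj X) (1:k) : _) =
        ((Sfun k).obj (FreeMod k Yf)).map (valHom X x)
          (Finsupp.single ⟨i, intoMinus u x hx⟩ 1) := by
      show _ = (FreeMod k Yf).map (sigmaF.map (valHom X x))
        (Finsupp.single ⟨i, intoMinus u x hx⟩ 1)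
      rw [freeMod_map_single]
      congr 2
      exact (intoMinus_comp u x hx).symm
    rw [heq]
    exact range_le_Jsub _ (valHom X x) (valHom_not_surjective X x) ⟨_, rfl⟩

end JFree

section MonoAlpha

variable {I : Type} (Yf : I → FICat)

lemma mono_alpha_free : Mono ((alphaNT k).app (FreeMod k Yf)) := by
  haveI : ∀ X : FICat, Mono (((alphaNT k).app (FreeMod k Yf)).app X) := by
    intro X
    rw [ModuleCat.mono_iff_injective]
    have hembinj : Function.Injective (fun p : Σ i, Yf i ⟶ X =>
        (⟨p.1, p.2 ≫ inclStar X⟩ : Σ i, Yf i ⟶ sigmaF.obj X)) := by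
      rintro ⟨i, f⟩ ⟨j, g⟩ h
      rw [Sigma.mk.inj_iff] at h
      obtain ⟨h1, h2⟩ := h
      subst h1
      rw [heq_iff_eq] at h2
      have hfg : f = g := by
        apply FIhom_ext; intro y
        exact Sum.inl_injective (congrFun (congrArg Subtype.val h2) y)
      rw [hfg]
    have main : ∀ d : (Σ i, Yf i ⟶ X) →₀ k,
        Finsupp.mapDomain (fun p : Σ i, Yf i ⟶ X =>
          (⟨p.1, p.2 ≫ inclStar X⟩ : Σ i, Yf i ⟶ sigmaF.obj X)) d ∈
            Finsupp.supported k k (sBad Yf X) →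
          d ∈ Finsupp.supported k k (badSet Yf X) := by
      intro d hd
      rw [Finsupp.mem_supported]
      intro p hp
      have hp' : d p ≠ 0 := Finsupp.mem_support_iff.1 (Finset.mem_coe.1 hp)
      have happ : Finsupp.mapDomain (fun p : Σ i, Yf i ⟶ X =>
          (⟨p.1, p.2 ≫ inclStar X⟩ : Σ i, Yf i ⟶ sigmaF.obj X)) d
            ⟨p.1, p.2 ≫ inclStar X⟩ = d p := Finsupp.mapDomain_apply hembinj d p
      have hmem : (⟨p.1, p.2 ≫ inclStar X⟩ : Σ i, Yf i ⟶ sigmaF.obj X) ∈ sBad Yf X := by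
        apply (Finsupp.mem_supported k _).1 hd
        rw [Finset.mem_coe, Finsupp.mem_support_iff, happ]
        exact hp'
      obtain ⟨x, hx⟩ := hmem
      intro hsurj
      obtain ⟨y, hy⟩ := hsurj x
      exact hx y (congrArg Sum.inl hy)
    intro a b hab
    obtain ⟨m, rfl⟩ := Submodule.Quotient.mk_surjective _ a
    obtain ⟨m', rfl⟩ := Submodule.Quotient.mk_surjective _ b
    have hab' : Submodule.Quotient.mk ((FreeMod k Yf).map (inclStar X) m) =
        (Submodule.Quotient.mk ((FreeMod k Yf).map (inclStar X) m') :
          _ ⧸ Jsub k ((Sfun k).obj (FreeMod k Yf)) X) := hab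
    erw [Submodule.Quotient.eq] at hab'
    rw [← map_sub] at hab'
    rw [jsub_sFreeMod] at hab'
    erw [Submodule.Quotient.eq, jsub_freeMod]
    exact main (m - m') hab' 
  exact NatTrans.mono_of_mono_app _

lemma mono_alpha_projective {Q : FIMod k} (hQ : Projective Q) :
    Mono ((alphaNT k).app Q) := by
  obtain ⟨s, hs⟩ := hQ.factors (𝟙 Q) (coverHom Q)
  haveI hm1 : Mono ((Ffunctor k).map s) := by
    have hid : (Ffunctor k).map s ≫ (Ffunctor k).map (coverHom Q) = 𝟙 _ := by
      rw [← CategoryTheory.Functor.map_comp, hs, CategoryTheory.Functor.map_id]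
    haveI : Mono ((Ffunctor k).map s ≫ (Ffunctor k).map (coverHom Q)) := by
      rw [hid]; infer_instance
    exact mono_of_mono _ ((Ffunctor k).map (coverHom Q))
  haveI hm2 := mono_alpha_free (k := k) (coverFam Q)
  haveI h1 : Mono ((Ffunctor k).map s ≫ (alphaNT k).app (FreeMod k (coverFam Q))) :=
    mono_comp _ _
  have hnat := (alphaNT k).naturality s
  rw [hnat] at h1
  exact mono_of_mono ((alphaNT k).app Q) ((Sfun k ⋙ Ffunctor k).map s)

end MonoAlpha

section SProjective

variable {I : Type} (Yf : I → FICat)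

lemma inclStar_comp_retr {Y X : FICat} (u : Y ⟶ sigmaF.obj X) (h : MissesStar u) :
    inclStar Y ≫ sigmaF.map (retr u h) = u := by
  apply FIhom_ext; intro y
  rw [comp_val]
  show (sigmaF.map (retr u h)).1 (Sum.inl y) = u.1 y
  rw [sigmaF_map_inl]
  exact inl_extract _ _

lemma sFreeMod_projective : Projective ((Sfun k).obj (FreeMod k Yf)) where
  factors {E Z} u e he := by
    classical
    have hsurj : ∀ (W : FICat), Function.Surjective (e.app W) := by
      intro W
      rw [← ModuleCat.epi_iff_surjective]
      infer_instance
    choose c0 hc0 using fun i =>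
      hsurj (Yf i) (u.app (Yf i) (Finsupp.single ⟨i, inclStar (Yf i)⟩ 1))
    choose c1 hc1 using fun (p : Σ i, (Yf i).carrier) =>
      hsurj (minusObj (Yf p.1) p.2) (u.app _ (Finsupp.single ⟨p.1, h0Hom (Yf p.1) p.2⟩ 1))
    let lf : ∀ (X : FICat), (Σ i, Yf i ⟶ sigmaF.obj X) → E.obj X := fun X p =>
      if h : MissesStar p.2 then E.map (retr p.2 h) (c0 p.1)
      else E.map (coHom p.2 (starPt p.2 h) (starPt_spec p.2 h)) (c1 ⟨p.1, starPt p.2 h⟩)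
    have key_nat : ∀ {X X' : FICat} (f : X ⟶ X') (p : Σ i, Yf i ⟶ sigmaF.obj X),
        lf X' ⟨p.1, p.2 ≫ sigmaF.map f⟩ = E.map f (lf X p) := by
      intro X X' f p
      by_cases h : MissesStar p.2
      · have h' : MissesStar (p.2 ≫ sigmaF.map f) := (missesStar_comp_iff p.2 f).2 h
        show (if hh : MissesStar (p.2 ≫ sigmaF.map f) then _ else _) = _
        rw [dif_pos h']
        show E.map (retr (p.2 ≫ sigmaF.map f) h') (c0 p.1) = E.map f (lf X p)
        have hx : lf X p = E.map (retr p.2 h) (c0 p.1) := dif_pos h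
        rw [hx, retr_natural p.2 f h h', E.map_comp]
        rfl
      · have h' : ¬ MissesStar (p.2 ≫ sigmaF.map f) :=
          fun hc => h ((missesStar_comp_iff p.2 f).1 hc)
        show (if hh : MissesStar (p.2 ≫ sigmaF.map f) then _ else _) = _
        rw [dif_neg h']
        have hx : lf X p = E.map (coHom p.2 (starPt p.2 h) (starPt_spec p.2 h))
            (c1 ⟨p.1, starPt p.2 h⟩) := dif_neg h
        rw [hx]
        have hkey : ∀ (y0' : (Yf p.1).carrier)
            (hq : (p.2 ≫ sigmaF.map f).1 y0' = Sum.inr PUnit.unit)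
            (hy' : y0' = starPt p.2 h),
            E.map (coHom (p.2 ≫ sigmaF.map f) y0' hq) (c1 ⟨p.1, y0'⟩) =
              E.map f (E.map (coHom p.2 (starPt p.2 h) (starPt_spec p.2 h))
                (c1 ⟨p.1, starPt p.2 h⟩)) := by
          intro y0' hq hy'
          subst hy'
          rw [coHom_natural p.2 f _ (starPt_spec p.2 h) hq, E.map_comp]
          rfl
        exact hkey _ (starPt_spec _ h') (starPt_comp p.2 f h h')
    refine ⟨{ app := fun X => ModuleCat.ofHom (Finsupp.lift (E.obj X) k _ (lf X)),
              naturality := ?_ }, ?_⟩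
    · intro X X' f
      apply ModuleCat.hom_ext
      apply Finsupp.lhom_ext
      intro p a
      show Finsupp.lift (E.obj X') k _ (lf X')
          (((Sfun k).obj (FreeMod k Yf)).map f (Finsupp.single p a)) =
        (E.map f) (Finsupp.lift (E.obj X) k _ (lf X) (Finsupp.single p a))
      rw [show (((Sfun k).obj (FreeMod k Yf)).map f (Finsupp.single p a) : _) =
        Finsupp.single (⟨p.1, p.2 ≫ sigmaF.map f⟩ : Σ i, Yf i ⟶ sigmaF.obj X') a from
        Finsupp.mapDomain_single]
      simp only [Finsupp.lift_apply, Finsupp.sum_single_index, zero_smul, map_smul]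
      rw [key_nat f p]
    · apply NatTrans.ext; funext X
      apply ModuleCat.hom_ext
      apply Finsupp.lhom_ext
      intro p a
      show e.app X (Finsupp.lift (E.obj X) k _ (lf X) (Finsupp.single p a)) =
        u.app X (Finsupp.single p a)
      simp only [Finsupp.lift_apply, Finsupp.sum_single_index, zero_smul, map_smul]
      have hone : e.app X (lf X p) = u.app X (Finsupp.single p 1) := by
        by_cases h : MissesStar p.2
        · have hx : lf X p = E.map (retr p.2 h) (c0 p.1) := dif_pos h
          rw [hx]
          have h1 : e.app X ((E.map (retr p.2 h)) (c0 p.1)) =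
              (Z.map (retr p.2 h)) (e.app (Yf p.1) (c0 p.1)) :=
            ConcreteCategory.congr_hom (e.naturality (retr p.2 h)) (c0 p.1)
          rw [h1, hc0]
          have h2 : (Z.map (retr p.2 h)) (u.app (Yf p.1)
              (Finsupp.single ⟨p.1, inclStar (Yf p.1)⟩ 1)) =
              u.app X (((Sfun k).obj (FreeMod k Yf)).map (retr p.2 h)
                (Finsupp.single ⟨p.1, inclStar (Yf p.1)⟩ 1)) :=
            (ConcreteCategory.congr_hom (u.naturality (retr p.2 h)) _).symm
          rw [h2]
          congr 2
          rw [show (((Sfun k).obj (FreeMod k Yf)).map (retr p.2 h)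
            (Finsupp.single ⟨p.1, inclStar (Yf p.1)⟩ 1) : _) =
            Finsupp.single (⟨p.1, inclStar (Yf p.1) ≫ sigmaF.map (retr p.2 h)⟩ :
              Σ i, Yf i ⟶ sigmaF.obj X) 1 from Finsupp.mapDomain_single]
          rw [inclStar_comp_retr p.2 h]
        · have hx : lf X p = E.map (coHom p.2 (starPt p.2 h) (starPt_spec p.2 h))
              (c1 ⟨p.1, starPt p.2 h⟩) := dif_neg h
          rw [hx]
          set y0 := starPt p.2 h
          set g := coHom p.2 y0 (starPt_spec p.2 h)
          have h1 : e.app X ((E.map g) (c1 ⟨p.1, y0⟩)) =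
              (Z.map g) (e.app (minusObj (Yf p.1) y0) (c1 ⟨p.1, y0⟩)) :=
            ConcreteCategory.congr_hom (e.naturality g) _
          have hcx := hc1 ⟨p.1, y0⟩
          dsimp only at hcx
          rw [h1, hcx]
          have h2 : (Z.map g) (u.app (minusObj (Yf p.1) y0)
              (Finsupp.single ⟨p.1, h0Hom (Yf p.1) y0⟩ 1)) =
              u.app X (((Sfun k).obj (FreeMod k Yf)).map g
                (Finsupp.single ⟨p.1, h0Hom (Yf p.1) y0⟩ 1)) :=
            (ConcreteCategory.congr_hom (u.naturality g) _).symm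
          rw [h2]
          congr 2
          rw [show (((Sfun k).obj (FreeMod k Yf)).map g
            (Finsupp.single ⟨p.1, h0Hom (Yf p.1) y0⟩ 1) : _) =
            Finsupp.single (⟨p.1, h0Hom (Yf p.1) y0 ≫ sigmaF.map g⟩ :
              Σ i, Yf i ⟶ sigmaF.obj X) 1 from Finsupp.mapDomain_single]
          rw [h0Hom_comp p.2 y0 (starPt_spec p.2 h)]
      erw [hone, ← map_smul]
      congr 1
      erw [Finsupp.smul_single]
      simp
      rfl

lemma projective_of_retract {P Q : FIMod k} (s : P ⟶ Q) (r : Q ⟶ P)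
    (hsr : s ≫ r = 𝟙 P) (hQ : Projective Q) : Projective P := by
  constructor
  intro E Z f e he
  obtain ⟨f', hf'⟩ := hQ.factors (r ≫ f) e
  exact ⟨s ≫ f', by rw [Category.assoc, hf', ← Category.assoc, hsr, Category.id_comp]⟩

lemma S_projective {Q : FIMod k} (hQ : Projective Q) :
    Projective ((Sfun k).obj Q) := by
  obtain ⟨s, hs⟩ := hQ.factors (𝟙 Q) (coverHom Q)
  exact projective_of_retract ((Sfun k).map s) ((Sfun k).map (coverHom Q))
    (by rw [← CategoryTheory.Functor.map_comp, hs, CategoryTheory.Functor.map_id]) (sFreeMod_projective _)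

end SProjective

end FIShiftAux

namespace FIShiftAux

open CategoryTheory CategoryTheory.Limits

variable {k : Type} [CommRing k]

section Assembly

noncomputable instance sfun_preservesLimits : PreservesLimitsOfSize.{0,0} (Sfun k) :=
  inferInstanceAs (PreservesLimitsOfSize.{0,0}
    ((Functor.whiskeringLeft FICat FICat (ModuleCat.{0} k)).obj sigmaF))

noncomputable instance sfun_preservesColimits : PreservesColimitsOfSize.{0,0} (Sfun k) :=
  inferInstanceAs (PreservesColimitsOfSize.{0,0}
    ((Functor.whiskeringLeft FICat FICat (ModuleCat.{0} k)).obj sigmaF))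

noncomputable instance sfun_preservesFiniteLimits : PreservesFiniteLimits (Sfun k) :=
  PreservesLimitsOfSize.preservesFiniteLimits _

noncomputable instance sfun_preservesFiniteColimits : PreservesFiniteColimits (Sfun k) :=
  PreservesColimitsOfSize.preservesFiniteColimits _

/-- The shift of a projective resolution is a projective resolution of the shift. -/
noncomputable def Sres [EnoughProjectives (FIMod k)] {V : FIMod k}
    (P : ProjectiveResolution V) : ProjectiveResolution ((Sfun k).obj V) where
  complex := ((Sfun k).mapHomologicalComplex (ComplexShape.down ℕ)).obj P.complex
  projective n := S_projective (P.projective n)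
  π := ((Sfun k).mapHomologicalComplex (ComplexShape.down ℕ)).map P.π ≫
    (HomologicalComplex.singleMapHomologicalComplex (Sfun k)
      (ComplexShape.down ℕ) 0).hom.app V
  quasiIso := inferInstance

lemma main_step [EnoughProjectives (FIMod k)] (a : ℕ) (V : FIMod k)
    (hz : IsZeroMod k ((HF k a).obj V)) :
    IsZeroMod k ((HF k a).obj ((Sfun k).obj V)) := by
  obtain ⟨P⟩ := HasProjectiveResolution.out (Z := V)
  have hzero : (NatTrans.mapHomologicalComplex (alphaNT k) (ComplexShape.down ℕ)).app
        P.complex ≫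
      (NatTrans.mapHomologicalComplex (betaNT k) (ComplexShape.down ℕ)).app P.complex = 0 := by
    apply HomologicalComplex.hom_ext
    intro n
    exact alpha_comp_beta k (P.complex.X n)
  have hSES : (ShortComplex.mk _ _ hzero).ShortExact := by
    apply HomologicalComplex.shortExact_of_degreewise_shortExact
    intro n
    exact shortExact_scMod (mono_alpha_projective (P.projective n))
  have hA : IsZero ((((Ffunctor k).mapHomologicalComplex
      (ComplexShape.down ℕ)).obj P.complex).homology a) :=
    IsZero.of_iso (isZero_of_isZeroMod hz) (P.isoLeftDerivedObj (Ffunctor k) a).symm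
  have hC : IsZero ((((Ffunctor k ⋙ Sfun k).mapHomologicalComplex
      (ComplexShape.down ℕ)).obj P.complex).homology a) := by
    have e : ((((((Ffunctor k).mapHomologicalComplex
          (ComplexShape.down ℕ)).obj P.complex)).sc a).map (Sfun k)).homology ≅
        (Sfun k).obj (((((Ffunctor k).mapHomologicalComplex
          (ComplexShape.down ℕ)).obj P.complex)).sc a).homology :=
      ShortComplex.mapHomologyIso _ (Sfun k)
    exact IsZero.of_iso ((Sfun k).map_isZero hA) e
  have hex := hSES.homology_exact₂ a
  have hB : IsZero ((((Sfun k ⋙ Ffunctor k).mapHomologicalComplex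
      (ComplexShape.down ℕ)).obj P.complex).homology a) := by
    apply hex.isZero_X₂
    · exact hA.eq_of_src _ _
    · exact hC.eq_of_tgt _ _
  have hfin : IsZero ((HF k a).obj ((Sfun k).obj V)) :=
    IsZero.of_iso hB ((Sres P).isoLeftDerivedObj (Ffunctor k) a)
  exact isZeroMod_of_isZero hfin

end Assembly

end FIShiftAux

/-- If `H_a(V) = 0` then `H_a(SV) = 0`; in particular if `V` is `F`-acyclic
then so is `SV`. -/
theorem FI_acyclicity_shifts (k : Type) [CommRing k]
    [CategoryTheory.EnoughProjectives (FIMod k)] (V : FIMod k) :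
    (∀ a : ℕ, IsZeroMod k ((HF k a).obj V) →
        IsZeroMod k ((HF k a).obj ((Sfun k).obj V))) ∧
      (FAcyclic k V → FAcyclic k ((Sfun k).obj V)) := by
  constructor
  · intro a hz
    exact FIShiftAux.main_step a V hz
  · intro h a ha
    exact FIShiftAux.main_step a V (h a ha)
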